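/- arXiv:2301.00769 — 2 statements merged into one kernel-verified Lean document; each statement's English description precedes it below -/
import Mathlib

section
/- Let p, q, r ∈ [1, ∞] satisfy 1/p + 1/q = 1 + 1/r. Suppose ψ : (0, ∞) → (0, ∞) satisfies ψ(t) · t^{(1−1/q)/2} → 0 as t → ∞. Then there exists G ∈ L^p(ℝ) such that the quotient ‖G∗Θ_t‖_r / ψ(t) is not bounded as t → ∞. -/
open MeasureTheory Real Filter
open scoped ENNReal Topology

/-! ### Auxiliary: countable Minkowski inequality -/

lemma ofReal_tsum_le_iSup (F : ℕ → ℝ) (hnn : ∀ n, 0 ≤ F n) :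
    ENNReal.ofReal (∑' n, F n) ≤ ⨆ N, ENNReal.ofReal (∑ n ∈ Finset.range N, F n) := by
  by_cases hs : Summable F
  · have h1 : Tendsto (fun N => ∑ n ∈ Finset.range N, F n) atTop (𝓝 (∑' n, F n)) :=
      hs.hasSum.tendsto_sum_nat
    have h2 : Tendsto (fun N => ENNReal.ofReal (∑ n ∈ Finset.range N, F n)) atTop
        (𝓝 (ENNReal.ofReal (∑' n, F n))) := (ENNReal.continuous_ofReal.tendsto _).comp h1
    exact le_of_tendsto' h2 (fun N => le_iSup (fun N => ENNReal.ofReal (∑ n ∈ Finset.range N, F n)) N)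
  · rw [tsum_eq_zero_of_not_summable hs]
    simp

lemma iSup_rpow_of_monotone (u : ℕ → ℝ≥0∞) (hu : Monotone u) (ρ : ℝ) :
    (⨆ N, u N) ^ ρ ≤ ⨆ N, (u N) ^ ρ := by
  have h1 : Tendsto u atTop (𝓝 (⨆ N, u N)) := tendsto_atTop_iSup hu
  have h2 : Tendsto (fun N => (u N) ^ ρ) atTop (𝓝 ((⨆ N, u N) ^ ρ)) :=
    (ENNReal.continuous_rpow_const.tendsto _).comp h1
  exact le_of_tendsto' h2 (fun N => le_iSup (fun N => (u N) ^ ρ) N)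

lemma eLpNorm_tsum_le_of_nonneg {F : ℕ → ℝ → ℝ} (hm : ∀ n, Measurable (F n))
    (hnn : ∀ n x, 0 ≤ F n x) {e : ℝ≥0∞} (he1 : 1 ≤ e) (hetop : e ≠ ∞) :
    eLpNorm (fun x => ∑' n, F n x) e (volume : Measure ℝ) ≤ ∑' n, eLpNorm (F n) e volume := by
  have he0 : e ≠ 0 := by positivity
  set ρ := e.toReal with hρdef
  have hρ1 : 1 ≤ ρ := by rw [hρdef, ← ENNReal.toReal_one]; exact ENNReal.toReal_mono hetop he1
  have hρ0 : 0 < ρ := lt_of_lt_of_le one_pos hρ1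
  set B := ∑' n, eLpNorm (F n) e (volume : Measure ℝ) with hB
  have hS : ∀ N : ℕ, ∫⁻ x, (ENNReal.ofReal (∑ n ∈ Finset.range N, F n x)) ^ ρ ≤ B ^ ρ := by
    intro N
    have h1 : eLpNorm (∑ n ∈ Finset.range N, F n) e (volume : Measure ℝ)
        ≤ ∑ n ∈ Finset.range N, eLpNorm (F n) e volume :=
      eLpNorm_sum_le (fun i _ => (hm i).aestronglyMeasurable) he1
    have h2 : eLpNorm (∑ n ∈ Finset.range N, F n) e (volume : Measure ℝ) ≤ B :=
      h1.trans (ENNReal.sum_le_tsum _)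
    have h3 := eLpNorm_eq_lintegral_rpow_enorm_toReal he0 hetop (f := ∑ n ∈ Finset.range N, F n)
      (μ := (volume : Measure ℝ))
    rw [h3] at h2
    have h4 := ENNReal.rpow_le_rpow h2 (le_of_lt hρ0)
    rw [← ENNReal.rpow_mul, one_div, inv_mul_cancel₀ (ne_of_gt hρ0), ENNReal.rpow_one] at h4
    refine le_trans (le_of_eq ?_) h4
    apply lintegral_congr
    intro x
    congr 1
    rw [Finset.sum_apply]
    rw [Real.enorm_eq_ofReal (Finset.sum_nonneg (fun i _ => hnn i x))]
  rw [eLpNorm_eq_lintegral_rpow_enorm_toReal he0 hetop]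
  have key : ∫⁻ x, (‖∑' n, F n x‖₊ : ℝ≥0∞) ^ ρ ≤ B ^ ρ := by
    have pointwise : ∀ x, (‖∑' n, F n x‖₊ : ℝ≥0∞) ^ ρ
        ≤ ⨆ N, (ENNReal.ofReal (∑ n ∈ Finset.range N, F n x)) ^ ρ := by
      intro x
      rw [← enorm_eq_nnnorm, Real.enorm_eq_ofReal (tsum_nonneg (fun n => hnn n x))]
      refine le_trans (ENNReal.rpow_le_rpow (ofReal_tsum_le_iSup _ (fun n => hnn n x))
        (le_of_lt hρ0)) ?_
      exact iSup_rpow_of_monotone _ (fun N M hNM => ENNReal.ofReal_le_ofReal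
        (Finset.sum_le_sum_of_subset_of_nonneg (Finset.range_subset_range.mpr hNM)
          (fun i _ _ => hnn i x))) ρ
    calc ∫⁻ x, (‖∑' n, F n x‖₊ : ℝ≥0∞) ^ ρ
        ≤ ∫⁻ x, ⨆ N, (ENNReal.ofReal (∑ n ∈ Finset.range N, F n x)) ^ ρ :=
          lintegral_mono pointwise
      _ = ⨆ N, ∫⁻ x, (ENNReal.ofReal (∑ n ∈ Finset.range N, F n x)) ^ ρ := by
          refine lintegral_iSup (fun N => ?_) (fun N M hNM x => ?_)
          · exact ((Finset.measurable_sum _ (fun i _ => hm i)).ennreal_ofReal).pow_const _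
          · exact ENNReal.rpow_le_rpow (ENNReal.ofReal_le_ofReal
              (Finset.sum_le_sum_of_subset_of_nonneg (Finset.range_subset_range.mpr hNM)
                (fun i _ _ => hnn i x))) (le_of_lt hρ0)
      _ ≤ B ^ ρ := iSup_le hS
  calc (∫⁻ x, (‖∑' n, F n x‖₊ : ℝ≥0∞) ^ ρ) ^ (1 / ρ)
      ≤ (B ^ ρ) ^ (1 / ρ) := ENNReal.rpow_le_rpow key (by positivity)
    _ = B := by rw [← ENNReal.rpow_mul, mul_one_div, div_self (ne_of_gt hρ0), ENNReal.rpow_one]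

/-! ### Auxiliary: interpolation bound -/

lemma eLpNorm_le_interp {u : ℝ → ℝ} {c M : ℝ} (hc : 0 ≤ c)
    (hnn : ∀ x, 0 ≤ u x) (hub : ∀ x, u x ≤ c)
    (hint : ∫⁻ x, ENNReal.ofReal (u x) ≤ ENNReal.ofReal M) {e : ℝ≥0∞} (he : 1 ≤ e) :
    eLpNorm u e volume ≤
      ENNReal.ofReal c ^ (1 - (1/e).toReal) * ENNReal.ofReal M ^ (1/e).toReal := by
  have he0 : e ≠ 0 := by positivity
  by_cases hetop : e = ∞
  · subst hetop
    have h0 : ((1:ℝ≥0∞)/∞).toReal = 0 := by simp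
    rw [h0, ENNReal.rpow_zero, sub_zero, ENNReal.rpow_one, mul_one, eLpNorm_exponent_top]
    refine le_trans (eLpNormEssSup_le_of_ae_bound (C := c) (Eventually.of_forall fun x => ?_)) ?_
    · rw [Real.norm_eq_abs, abs_of_nonneg (hnn x)]; exact hub x
    · rw [ENNReal.ofReal]
  · have hρ1 : 1 ≤ e.toReal := by
      rw [← ENNReal.toReal_one]; exact ENNReal.toReal_mono hetop he
    set ρ := e.toReal with hρdef
    have hρ0 : 0 < ρ := lt_of_lt_of_le one_pos hρ1
    have hγ : (1/e).toReal = 1/ρ := by rw [one_div, one_div, ENNReal.toReal_inv]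
    rw [eLpNorm_eq_lintegral_rpow_enorm_toReal he0 hetop, hγ]
    have pointwise : ∀ x, (‖u x‖₊ : ℝ≥0∞) ^ ρ
        ≤ ENNReal.ofReal c ^ (ρ - 1) * ENNReal.ofReal (u x) := by
      intro x
      rw [← enorm_eq_nnnorm, Real.enorm_eq_ofReal (hnn x)]
      calc ENNReal.ofReal (u x) ^ ρ
          = ENNReal.ofReal (u x) ^ (ρ - 1) * ENNReal.ofReal (u x) := by
            have hA : ENNReal.ofReal (u x) ^ (ρ-1) * ENNReal.ofReal (u x) ^ (1:ℝ)
                = ENNReal.ofReal (u x) ^ ρ := by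
              rw [← ENNReal.rpow_add_of_nonneg _ _ (by linarith) zero_le_one, sub_add_cancel]
            rw [← hA, ENNReal.rpow_one]
        _ ≤ ENNReal.ofReal c ^ (ρ - 1) * ENNReal.ofReal (u x) :=
            mul_le_mul_left (ENNReal.rpow_le_rpow (ENNReal.ofReal_le_ofReal (hub x))
              (by linarith)) _
    calc (∫⁻ x, (‖u x‖₊ : ℝ≥0∞) ^ ρ) ^ (1/ρ)
        ≤ (∫⁻ x, ENNReal.ofReal c ^ (ρ - 1) * ENNReal.ofReal (u x)) ^ (1/ρ) :=
          ENNReal.rpow_le_rpow (lintegral_mono pointwise) (by positivity)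
      _ ≤ (ENNReal.ofReal c ^ (ρ - 1) * ENNReal.ofReal M) ^ (1/ρ) := by
          rw [lintegral_const_mul' _ _ (ENNReal.rpow_ne_top_of_nonneg (by linarith)
            ENNReal.ofReal_ne_top)]
          exact ENNReal.rpow_le_rpow (mul_le_mul_right hint _) (by positivity)
      _ = ENNReal.ofReal c ^ (1 - 1/ρ) * ENNReal.ofReal M ^ (1/ρ) := by
          rw [ENNReal.mul_rpow_of_nonneg _ _ (by positivity), ← ENNReal.rpow_mul]
          congr 2
          field_simp

/-- The Gauss–Weierstrass heat kernel on the real line. -/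
noncomputable def heatKernel (t x : ℝ) : ℝ :=
  Real.exp (-x ^ 2 / (4 * t)) / (2 * Real.sqrt (Real.pi * t))

/-! ### Heat kernel basics -/

lemma heatKernel_nonneg (t x : ℝ) : 0 ≤ heatKernel t x := by
  unfold heatKernel
  positivity

lemma heatKernel_continuous (t : ℝ) : Continuous (heatKernel t) := by
  unfold heatKernel
  exact ((Real.continuous_exp.comp (by continuity)).div_const _)

lemma heatKernel_eq (t : ℝ) (x : ℝ) :
    heatKernel t x = Real.exp (-(1/(4*t)) * x ^ 2) / (2 * Real.sqrt (Real.pi * t)) := by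
  unfold heatKernel
  congr 1
  ring_nf

lemma heatKernel_integrable {t : ℝ} (ht : 0 < t) : Integrable (heatKernel t) volume := by
  have h : Integrable (fun x : ℝ => Real.exp (-(1/(4*t)) * x ^ 2)) volume :=
    integrable_exp_neg_mul_sq (by positivity)
  have := h.div_const (2 * Real.sqrt (Real.pi * t))
  refine this.congr (Eventually.of_forall fun x => ?_)
  rw [heatKernel_eq t]

lemma heatKernel_integral {t : ℝ} (ht : 0 < t) : ∫ y, heatKernel t y = 1 := by
  have h : ∫ y : ℝ, Real.exp (-(1/(4*t)) * y ^ 2) = Real.sqrt (Real.pi / (1/(4*t))) :=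
    integral_gaussian _
  have h2 : ∫ y, heatKernel t y
      = (∫ y : ℝ, Real.exp (-(1/(4*t)) * y ^ 2)) / (2 * Real.sqrt (Real.pi * t)) := by
    rw [← integral_div]
    exact integral_congr_ae (Eventually.of_forall fun x => heatKernel_eq t x)
  rw [h2, h]
  rw [show Real.pi / (1/(4*t)) = (4*t) * Real.pi by field_simp]
  rw [show (4:ℝ)*t*Real.pi = (2:ℝ)^2 * (Real.pi * t) by ring, Real.sqrt_mul (by positivity),
    Real.sqrt_sq (by norm_num)]
  have hs : 0 < Real.sqrt (Real.pi * t) := Real.sqrt_pos.mpr (by positivity)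
  field_simp

lemma heatKernel_lintegral {t : ℝ} (ht : 0 < t) :
    ∫⁻ y, ENNReal.ofReal (heatKernel t y) = 1 := by
  rw [← ofReal_integral_eq_lintegral_ofReal (heatKernel_integrable ht)
    (Eventually.of_forall fun y => heatKernel_nonneg t y), heatKernel_integral ht,
    ENNReal.ofReal_one]

lemma heatKernel_ge {t y : ℝ} (ht : 0 < t) (hy : |y| ≤ Real.sqrt t) :
    Real.exp (-4⁻¹) / (2 * Real.sqrt Real.pi) / Real.sqrt t ≤ heatKernel t y := by
  unfold heatKernel
  have hst : 0 < Real.sqrt t := Real.sqrt_pos.mpr ht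
  have h1 : y ^ 2 ≤ t := by
    have := sq_abs y ▸ pow_le_pow_left₀ (abs_nonneg y) hy 2
    simpa [Real.sq_sqrt ht.le] using this
  have hexp : Real.exp (-4⁻¹) ≤ Real.exp (-y^2/(4*t)) := by
    apply Real.exp_le_exp.mpr
    rw [neg_div, neg_le_neg_iff, div_le_iff₀ (by positivity)]
    calc y^2 ≤ t := h1
      _ ≤ 4⁻¹ * (4*t) := by ring_nf; linarith
  have hden : 2 * Real.sqrt (Real.pi * t) = 2 * Real.sqrt Real.pi * Real.sqrt t := by
    rw [Real.sqrt_mul Real.pi_pos.le]; ring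
  rw [hden, div_div]
  gcongr

/-! ### Bumps and their convolution with the heat kernel -/

noncomputable def bump (c S : ℝ) : ℝ → ℝ := Set.indicator (Set.Icc 0 S) (fun _ => c)

noncomputable def conv (c S t : ℝ) (x : ℝ) : ℝ := ∫ y, bump c S (x - y) * heatKernel t y

lemma bump_nonneg {c S : ℝ} (hc : 0 ≤ c) (x : ℝ) : 0 ≤ bump c S x := by
  unfold bump; exact Set.indicator_nonneg (fun _ _ => hc) x

lemma bump_le {c S : ℝ} (hc : 0 ≤ c) (x : ℝ) : bump c S x ≤ c := by
  unfold bump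
  exact Set.indicator_le' (fun _ _ => le_refl c) (fun _ _ => hc) x

lemma bump_measurable {c S : ℝ} : Measurable (bump c S) :=
  Measurable.indicator measurable_const measurableSet_Icc

lemma conv_integrand_integrable {c S t : ℝ} (hc : 0 ≤ c) (ht : 0 < t) (x : ℝ) :
    Integrable (fun y => bump c S (x - y) * heatKernel t y) volume := by
  refine Integrable.mono' ((heatKernel_integrable ht).const_mul c) ?_ ?_
  · exact ((bump_measurable.comp (measurable_const.sub measurable_id)).mul
      (heatKernel_continuous t).measurable).aestronglyMeasurable
  · refine Eventually.of_forall fun y => ?_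
    rw [Real.norm_eq_abs, abs_of_nonneg (mul_nonneg (bump_nonneg hc _) (heatKernel_nonneg t y))]
    exact mul_le_mul_of_nonneg_right (bump_le hc _) (heatKernel_nonneg t y)

lemma conv_nonneg' {c S t : ℝ} (hc : 0 ≤ c) (x : ℝ) : 0 ≤ conv c S t x :=
  integral_nonneg fun y => mul_nonneg (bump_nonneg hc _) (heatKernel_nonneg t y)

lemma conv_le {c S t : ℝ} (hc : 0 ≤ c) (ht : 0 < t) (x : ℝ) : conv c S t x ≤ c := by
  unfold conv
  calc ∫ y, bump c S (x - y) * heatKernel t y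
      ≤ ∫ y, c * heatKernel t y := by
        refine integral_mono_of_nonneg ?_ ((heatKernel_integrable ht).const_mul c) ?_
        · exact Eventually.of_forall fun y =>
            mul_nonneg (bump_nonneg hc _) (heatKernel_nonneg t y)
        · exact Eventually.of_forall fun y =>
            mul_le_mul_of_nonneg_right (bump_le hc _) (heatKernel_nonneg t y)
    _ = c := by rw [integral_const_mul, heatKernel_integral ht, mul_one]

lemma conv_measurable {c S t : ℝ} : Measurable (conv c S t) := by
  have h : StronglyMeasurable (Function.uncurry fun x y => bump c S (x - y) * heatKernel t y) := by
    apply Measurable.stronglyMeasurable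
    exact (bump_measurable.comp (measurable_fst.sub measurable_snd)).mul
      ((heatKernel_continuous t).measurable.comp measurable_snd)
  exact h.integral_prod_right'.measurable

lemma conv_lintegral {c S t : ℝ} (hc : 0 ≤ c) (hS : 0 ≤ S) (ht : 0 < t) :
    ∫⁻ x, ENNReal.ofReal (conv c S t x) ≤ ENNReal.ofReal (c * S) := by
  have h1 : ∀ x, ENNReal.ofReal (conv c S t x)
      = ∫⁻ y, ENNReal.ofReal (bump c S (x - y) * heatKernel t y) := by
    intro x
    exact ofReal_integral_eq_lintegral_ofReal (conv_integrand_integrable hc ht x)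
      (Eventually.of_forall fun y => mul_nonneg (bump_nonneg hc _) (heatKernel_nonneg t y))
  simp_rw [h1]
  rw [lintegral_lintegral_swap]
  · have hbump : ∫⁻ x, ENNReal.ofReal (bump c S x) = ENNReal.ofReal (c * S) := by
      have heq : (fun x => ENNReal.ofReal (bump c S x))
          = Set.indicator (Set.Icc 0 S) (fun _ => ENNReal.ofReal c) := by
        funext x
        unfold bump
        simp [Set.indicator_apply]
        split <;> simp
      rw [heq, lintegral_indicator_const measurableSet_Icc, Real.volume_Icc, sub_zero,
        ← ENNReal.ofReal_mul hc]
    have inner : ∀ y, ∫⁻ x, ENNReal.ofReal (bump c S (x - y) * heatKernel t y)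
        = ENNReal.ofReal (c * S) * ENNReal.ofReal (heatKernel t y) := by
      intro y
      simp_rw [ENNReal.ofReal_mul (bump_nonneg hc _)]
      rw [lintegral_mul_const' _ _ ENNReal.ofReal_ne_top]
      congr 1
      rw [lintegral_sub_right_eq_self (fun x => ENNReal.ofReal (bump c S x)) y]
      exact hbump
    simp_rw [inner]
    rw [lintegral_const_mul' _ _ ENNReal.ofReal_ne_top]
    rw [heatKernel_lintegral ht, mul_one]
  · apply Measurable.aemeasurable
    have h2 : (Function.uncurry fun x y => ENNReal.ofReal (bump c S (x - y) * heatKernel t y))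
        = fun p : ℝ × ℝ => ENNReal.ofReal (bump c S (p.1 - p.2) * heatKernel t p.2) := rfl
    rw [h2]
    exact ((bump_measurable.comp (measurable_fst.sub measurable_snd)).mul
      ((heatKernel_continuous t).measurable.comp measurable_snd)).ennreal_ofReal

lemma conv_ge {c t x : ℝ} (hc : 0 ≤ c) (ht : 0 < t)
    (hx : x ∈ Set.Icc 0 (Real.sqrt t)) :
    c * (Real.exp (-4⁻¹) / (2 * Real.sqrt Real.pi)) ≤ conv c (Real.sqrt t) t x := by
  have hS : 0 < Real.sqrt t := Real.sqrt_pos.mpr ht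
  set S := Real.sqrt t with hSdef
  set κS := Real.exp (-4⁻¹) / (2 * Real.sqrt Real.pi) / S with hκS
  have hκSpos : 0 < κS := by
    rw [hκS]; positivity
  have key : ∫ y, Set.indicator (Set.Icc (x - S) x) (fun _ => c * κS) y
      ≤ conv c S t x := by
    refine integral_mono_of_nonneg ?_ (conv_integrand_integrable hc ht x) ?_
    · exact Eventually.of_forall fun y =>
        Set.indicator_nonneg (fun _ _ => by positivity) y
    · refine Eventually.of_forall fun y => ?_
      rw [Set.indicator_apply]
      split_ifs with hy
      · obtain ⟨hy1, hy2⟩ := hy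
        obtain ⟨hx1, hx2⟩ := hx
        have hxy : x - y ∈ Set.Icc 0 S := ⟨by linarith, by linarith⟩
        have habs : |y| ≤ S := abs_le.mpr ⟨by linarith, by linarith⟩
        have hb : bump c (Real.sqrt t) (x - y) = c := by
          unfold bump; rw [Set.indicator_of_mem hxy]
        show c * κS ≤ bump c (Real.sqrt t) (x - y) * heatKernel t y
        simp only [hb]
        exact mul_le_mul_of_nonneg_left (heatKernel_ge ht habs) hc
      · exact mul_nonneg (bump_nonneg hc _) (heatKernel_nonneg t y)
  refine le_trans (le_of_eq ?_) key
  rw [integral_indicator_const _ measurableSet_Icc, measureReal_def, Real.volume_Icc]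
  rw [show x - (x - S) = S by ring, ENNReal.toReal_ofReal hS.le]
  rw [smul_eq_mul, hκS]
  field_simp

theorem heatKernel_estimate_sharp_infty (p q r : ℝ≥0∞)
    (hp : 1 ≤ p) (hq : 1 ≤ q) (hr : 1 ≤ r) (hpqr : 1 / p + 1 / q = 1 + 1 / r)
    (ψ : ℝ → ℝ) (hψpos : ∀ t > 0, 0 < ψ t)
    (hψ : Tendsto (fun t : ℝ => ψ t * t ^ ((1 - (1 / q).toReal) / 2)) atTop (𝓝 0)) :
    ∃ G : ℝ → ℝ, MemLp G p (volume : Measure ℝ) ∧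
      ¬ ∃ C : ℝ, ∀ᶠ t in atTop,
        (eLpNorm (fun x : ℝ => ∫ y : ℝ, G (x - y) * heatKernel t y) r
            (volume : Measure ℝ)).toReal / ψ t ≤ C := by
  -- exponent bookkeeping
  have hp' : 1/p ≤ 1 := by rw [one_div]; exact ENNReal.inv_le_one.mpr hp
  have hq' : 1/q ≤ 1 := by rw [one_div]; exact ENNReal.inv_le_one.mpr hq
  have hr' : 1/r ≤ 1 := by rw [one_div]; exact ENNReal.inv_le_one.mpr hr
  have hpfin : 1/p ≠ ∞ := ne_top_of_le_ne_top ENNReal.one_ne_top hp'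
  have hqfin : 1/q ≠ ∞ := ne_top_of_le_ne_top ENNReal.one_ne_top hq'
  have hrfin : 1/r ≠ ∞ := ne_top_of_le_ne_top ENNReal.one_ne_top hr'
  set α := (1/p).toReal with hα
  set γ := (1/r).toReal with hγ
  have hα0 : 0 ≤ α := ENNReal.toReal_nonneg
  have hγ0 : 0 ≤ γ := ENNReal.toReal_nonneg
  have hrp : 1/r ≤ 1/p := by
    have h1 : (1:ℝ≥0∞) + 1/r ≤ 1 + 1/p := by
      rw [← hpqr, add_comm]
      exact add_le_add_left hq' _
    exact (ENNReal.add_le_add_iff_left ENNReal.one_ne_top).mp h1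
  have hγα : γ ≤ α := ENNReal.toReal_mono hpfin hrp
  set a := (α - γ)/2 with ha
  have ha0 : 0 ≤ a := by rw [ha]; linarith
  have hsum : α + (1/q).toReal = 1 + γ := by
    rw [hα, hγ, ← ENNReal.toReal_add hpfin hqfin, hpqr,
      ENNReal.toReal_add ENNReal.one_ne_top hrfin, ENNReal.toReal_one]
  have hexp : (1 - (1/q).toReal)/2 = a := by rw [ha]; linarith
  have hψ' : Tendsto (fun t : ℝ => ψ t * t ^ a) atTop (𝓝 0) := by
    simp only [← hexp]; exact hψ
  -- constants and scales
  set κ := Real.exp (-4⁻¹) / (2 * Real.sqrt Real.pi) with hκdef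
  have hκ : 0 < κ := by rw [hκdef]; positivity
  set b : ℕ → ℝ := fun n => (1/2)^(n+1) with hb
  have hbpos : ∀ n, 0 < b n := fun n => by simp only [hb]; positivity
  have hbsumm : Summable b := by
    simp only [hb]
    exact Summable.comp_injective
      (summable_geometric_of_lt_one (by norm_num) (by norm_num)) (add_left_injective 1)
  have hbtsum : ∑' n, b n = 1 := by
    simp only [hb]
    simp_rw [pow_succ, mul_comm]
    rw [tsum_mul_left, tsum_geometric_of_lt_one (by norm_num) (by norm_num)]
    norm_num
  have hTex : ∀ n : ℕ, ∃ T : ℝ, ((n:ℝ)+1 ≤ T) ∧ ψ T * T ^ a < κ * b n / ((n:ℝ)+1) := by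
    intro n
    have hεpos : 0 < κ * b n / ((n:ℝ)+1) := by positivity
    exact ((eventually_ge_atTop ((n:ℝ)+1)).and (hψ'.eventually_lt_const hεpos)).exists
  choose T hTge hTlt using hTex
  have hT1 : ∀ n, 1 ≤ T n := fun n =>
    le_trans (by linarith [Nat.cast_nonneg (α := ℝ) n]) (hTge n)
  have hTpos : ∀ n, 0 < T n := fun n => lt_of_lt_of_le one_pos (hT1 n)
  set S : ℕ → ℝ := fun n => Real.sqrt (T n) with hS
  have hSpos : ∀ n, 0 < S n := fun n => Real.sqrt_pos.mpr (hTpos n)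
  set c : ℕ → ℝ := fun n => b n * (T n) ^ (-(α/2)) with hc
  have hcpos : ∀ n, 0 < c n := fun n => mul_pos (hbpos n) (Real.rpow_pos_of_pos (hTpos n) _)
  have hcb : ∀ n, c n ≤ b n := by
    intro n
    simp only [hc]
    calc b n * (T n)^(-(α/2)) ≤ b n * 1 :=
        mul_le_mul_of_nonneg_left
          (Real.rpow_le_one_of_one_le_of_nonpos (hT1 n) (by linarith)) (hbpos n).le
      _ = b n := mul_one _
  have hSγ : ∀ n, S n ^ γ = (T n) ^ (γ/2) := by
    intro n
    simp only [hS]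
    rw [Real.sqrt_eq_rpow, ← Real.rpow_mul (hTpos n).le]
    congr 1
    ring
  have hcS : ∀ n, c n * S n ^ γ = κ⁻¹ * (κ * b n * (T n) ^ (-a)) := by
    intro n
    rw [hSγ n, hc, mul_assoc, ← Real.rpow_add (hTpos n)]
    rw [show -(α/2) + γ/2 = -a by rw [ha]; ring]
    field_simp
  have hcSle : ∀ n, c n * S n ^ γ ≤ b n := by
    intro n
    rw [hcS n]
    have h1 : (T n) ^ (-a) ≤ 1 := Real.rpow_le_one_of_one_le_of_nonpos (hT1 n) (by linarith)
    calc κ⁻¹ * (κ * b n * (T n)^(-a)) = b n * (T n)^(-a) := by field_simp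
      _ ≤ b n * 1 := mul_le_mul_of_nonneg_left h1 (hbpos n).le
      _ = b n := mul_one _
  -- the function G
  set G : ℝ → ℝ := fun x => ∑' n, bump (c n) (S n) x with hG
  have hGsummand : ∀ n x, 0 ≤ bump (c n) (S n) x := fun n x => bump_nonneg (hcpos n).le x
  have hGsummandle : ∀ n x, bump (c n) (S n) x ≤ b n := fun n x =>
    le_trans (bump_le (hcpos n).le x) (hcb n)
  have hGsum : ∀ x, Summable (fun n => bump (c n) (S n) x) := fun x =>
    Summable.of_nonneg_of_le (fun n => hGsummand n x) (fun n => hGsummandle n x) hbsumm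
  have hGnn : ∀ x, 0 ≤ G x := fun x => tsum_nonneg (fun n => hGsummand n x)
  have hGle1 : ∀ x, G x ≤ 1 := by
    intro x
    rw [hG, ← hbtsum]
    exact Summable.tsum_le_tsum (fun n => hGsummandle n x) (hGsum x) hbsumm
  have hGm : Measurable G := by
    simp only [hG]
    apply measurable_of_tendsto_metrizable
      (f := fun N => fun x => ∑ n ∈ Finset.range N, bump (c n) (S n) x)
    · intro N; exact Finset.measurable_sum _ (fun i _ => bump_measurable)
    · rw [tendsto_pi_nhds]; intro x; exact (hGsum x).hasSum.tendsto_sum_nat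
  -- eLpNorm of the bumps
  have hbump_norm : ∀ (n : ℕ) (e : ℝ≥0∞), e ≠ 0 →
      eLpNorm (bump (c n) (S n)) e volume = ENNReal.ofReal (c n * S n ^ (1/e).toReal) := by
    intro n e he
    unfold bump
    rw [eLpNorm_indicator_const' measurableSet_Icc ?_ he]
    · rw [Real.volume_Icc, sub_zero]
      have h1 : (1 / e.toReal) = (1/e).toReal := by rw [one_div, one_div, ENNReal.toReal_inv]
      rw [← h1, ENNReal.ofReal_rpow_of_nonneg (hSpos n).le (by positivity),
        Real.enorm_eq_ofReal (hcpos n).le, ← ENNReal.ofReal_mul (hcpos n).le]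
    · rw [Real.volume_Icc, sub_zero]
      simp only [ne_eq, ENNReal.ofReal_eq_zero, not_le]
      exact hSpos n
  -- membership in L^p
  have hmemp : MemLp G p volume := by
    by_cases hptop : p = ∞
    · subst hptop
      exact memLp_top_of_bound hGm.aestronglyMeasurable 1 (Eventually.of_forall fun x => by
        rw [Real.norm_eq_abs, abs_of_nonneg (hGnn x)]; exact hGle1 x)
    · refine ⟨hGm.aestronglyMeasurable, ?_⟩
      have hp0 : p ≠ 0 := (lt_of_lt_of_le zero_lt_one hp).ne'
      have h1 : eLpNorm G p volume ≤ ∑' n, eLpNorm (bump (c n) (S n)) p volume := by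
        simp only [hG]
        exact eLpNorm_tsum_le_of_nonneg (fun n => bump_measurable) hGsummand hp hptop
      have h2 : ∀ n, eLpNorm (bump (c n) (S n)) p volume ≤ ENNReal.ofReal (b n) := by
        intro n
        rw [hbump_norm n p hp0]
        apply ENNReal.ofReal_le_ofReal
        have hSα : S n ^ α = (T n) ^ (α/2) := by
          simp only [hS]
          rw [Real.sqrt_eq_rpow, ← Real.rpow_mul (hTpos n).le]
          congr 1
          ring
        rw [← hα, hSα]
        simp only [hc]
        rw [mul_assoc, ← Real.rpow_add (hTpos n), neg_add_cancel, Real.rpow_zero, mul_one]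
      calc eLpNorm G p volume ≤ ∑' n, eLpNorm (bump (c n) (S n)) p volume := h1
        _ ≤ ∑' n, ENNReal.ofReal (b n) := ENNReal.tsum_le_tsum h2
        _ = ENNReal.ofReal 1 := by
            rw [← ENNReal.ofReal_tsum_of_nonneg (fun n => (hbpos n).le) hbsumm, hbtsum]
        _ < ∞ := by simp
  refine ⟨G, hmemp, ?_⟩
  rintro ⟨C, hC⟩
  rw [eventually_atTop] at hC
  obtain ⟨M, hM⟩ := hC
  obtain ⟨n, hn⟩ := exists_nat_ge (max M C)
  have hMn : M ≤ T n := by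
    have h1 : M ≤ (n:ℝ) := le_trans (le_max_left M C) hn
    linarith [hTge n]
  have hCn : C < (n:ℝ)+1 := by
    have h1 : C ≤ (n:ℝ) := le_trans (le_max_right M C) hn
    linarith
  have ht : 0 < T n := hTpos n
  have hQ := hM (T n) hMn
  set K : ℝ → ℝ := fun x => ∫ y, G (x - y) * heatKernel (T n) y with hKdef
  -- identification of the convolution as a sum
  have hKeq : ∀ x, K x = ∑' m, conv (c m) (S m) (T n) x := by
    intro x
    have hpt : (fun y => G (x - y) * heatKernel (T n) y)
        = fun y => ∑' m, bump (c m) (S m) (x - y) * heatKernel (T n) y := by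
      funext y
      simp only [hG]
      exact tsum_mul_right.symm
    have hmeas : ∀ m, AEStronglyMeasurable
        (fun y => bump (c m) (S m) (x - y) * heatKernel (T n) y) volume := fun m =>
      ((bump_measurable.comp (measurable_const.sub measurable_id)).mul
        (heatKernel_continuous (T n)).measurable).aestronglyMeasurable
    have hlint : ∀ m, ∫⁻ y, ‖bump (c m) (S m) (x - y) * heatKernel (T n) y‖₊ ∂volume
        ≤ ENNReal.ofReal (b m) := by
      intro m
      have hle : ∀ y, (‖bump (c m) (S m) (x - y) * heatKernel (T n) y‖₊ : ℝ≥0∞)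
          ≤ ENNReal.ofReal (b m) * ENNReal.ofReal (heatKernel (T n) y) := by
        intro y
        rw [← enorm_eq_nnnorm, Real.enorm_eq_ofReal (mul_nonneg (bump_nonneg (hcpos m).le _)
          (heatKernel_nonneg _ y)), ENNReal.ofReal_mul (bump_nonneg (hcpos m).le _)]
        exact mul_le_mul_left (ENNReal.ofReal_le_ofReal
          (le_trans (bump_le (hcpos m).le _) (hcb m))) _
      calc ∫⁻ y, ‖bump (c m) (S m) (x - y) * heatKernel (T n) y‖₊ ∂volume
          ≤ ∫⁻ y, ENNReal.ofReal (b m) * ENNReal.ofReal (heatKernel (T n) y) :=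
            lintegral_mono hle
        _ = ENNReal.ofReal (b m) := by
            rw [lintegral_const_mul' _ _ ENNReal.ofReal_ne_top, heatKernel_lintegral ht, mul_one]
    have hfin : ∑' m, ∫⁻ y, ‖bump (c m) (S m) (x - y) * heatKernel (T n) y‖₊ ∂volume ≠ ⊤ := by
      refine ne_top_of_le_ne_top (b := ENNReal.ofReal 1) (by simp) ?_
      calc ∑' m, ∫⁻ y, ‖bump (c m) (S m) (x - y) * heatKernel (T n) y‖₊ ∂volume
          ≤ ∑' m, ENNReal.ofReal (b m) := ENNReal.tsum_le_tsum hlint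
        _ = ENNReal.ofReal 1 := by
            rw [← ENNReal.ofReal_tsum_of_nonneg (fun m => (hbpos m).le) hbsumm, hbtsum]
    calc K x = ∫ y, ∑' m, bump (c m) (S m) (x - y) * heatKernel (T n) y := by
          simp only [hKdef]
          rw [hpt]
      _ = ∑' m, ∫ y, bump (c m) (S m) (x - y) * heatKernel (T n) y :=
          integral_tsum hmeas hfin
      _ = ∑' m, conv (c m) (S m) (T n) x := rfl
  have husum : ∀ x, Summable (fun m => conv (c m) (S m) (T n) x) := fun x =>
    Summable.of_nonneg_of_le (fun m => conv_nonneg' (hcpos m).le x)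
      (fun m => le_trans (conv_le (hcpos m).le ht x) (hcb m)) hbsumm
  have hKnn : ∀ x, 0 ≤ K x := fun x => by
    rw [hKeq]; exact tsum_nonneg (fun m => conv_nonneg' (hcpos m).le x)
  -- upper bound
  have hupper : eLpNorm K r volume ≤ 1 := by
    by_cases hrtop : r = ∞
    · subst hrtop
      rw [eLpNorm_exponent_top]
      refine le_trans (eLpNormEssSup_le_of_ae_bound (C := 1)
        (Eventually.of_forall fun x => ?_)) (by simp)
      rw [Real.norm_eq_abs, abs_of_nonneg (hKnn x), hKeq]
      calc ∑' m, conv (c m) (S m) (T n) x ≤ ∑' m, b m :=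
            Summable.tsum_le_tsum (fun m => le_trans (conv_le (hcpos m).le ht x) (hcb m))
              (husum x) hbsumm
        _ = 1 := hbtsum
    · have h1 : eLpNorm K r volume
          = eLpNorm (fun x => ∑' m, conv (c m) (S m) (T n) x) r volume :=
        eLpNorm_congr_ae (Eventually.of_forall hKeq)
      rw [h1]
      refine le_trans (eLpNorm_tsum_le_of_nonneg (fun m => conv_measurable)
        (fun m x => conv_nonneg' (hcpos m).le x) hr hrtop) ?_
      have h2 : ∀ m, eLpNorm (conv (c m) (S m) (T n)) r volume ≤ ENNReal.ofReal (b m) := by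
        intro m
        refine le_trans (eLpNorm_le_interp (hcpos m).le
          (fun x => conv_nonneg' (hcpos m).le x) (fun x => conv_le (hcpos m).le ht x)
          (conv_lintegral (hcpos m).le (hSpos m).le ht) hr) ?_
        rw [ENNReal.ofReal_rpow_of_pos (hcpos m),
          ENNReal.ofReal_rpow_of_pos (mul_pos (hcpos m) (hSpos m)),
          ← ENNReal.ofReal_mul (Real.rpow_pos_of_pos (hcpos m) _).le]
        apply ENNReal.ofReal_le_ofReal
        calc c m ^ (1 - γ) * (c m * S m) ^ γ = c m * S m ^ γ := by
              rw [Real.mul_rpow (hcpos m).le (hSpos m).le, ← mul_assoc,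
                ← Real.rpow_add (hcpos m), sub_add_cancel, Real.rpow_one]
          _ ≤ b m := hcSle m
      calc ∑' m, eLpNorm (conv (c m) (S m) (T n)) r volume
          ≤ ∑' m, ENNReal.ofReal (b m) := ENNReal.tsum_le_tsum h2
        _ = ENNReal.ofReal 1 := by
            rw [← ENNReal.ofReal_tsum_of_nonneg (fun m => (hbpos m).le) hbsumm, hbtsum]
        _ ≤ 1 := by simp
  -- lower bound
  have hKge : ∀ x ∈ Set.Icc (0:ℝ) (S n), c n * κ ≤ K x := by
    intro x hx
    rw [hKeq]
    have hx' : x ∈ Set.Icc 0 (Real.sqrt (T n)) := by simpa [hS] using hx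
    calc c n * κ ≤ conv (c n) (S n) (T n) x := by
          rw [hκdef]
          simp only [hS]
          exact conv_ge (hcpos n).le ht hx'
      _ ≤ ∑' m, conv (c m) (S m) (T n) x :=
          Summable.le_tsum (husum x) n (fun m _ => conv_nonneg' (hcpos m).le x)
  have hr0 : r ≠ 0 := (lt_of_lt_of_le zero_lt_one hr).ne'
  have hlower : ENNReal.ofReal (κ * b n * (T n) ^ (-a)) ≤ eLpNorm K r volume := by
    have hmono : eLpNorm (Set.indicator (Set.Icc (0:ℝ) (S n)) (fun _ => c n * κ)) r volume
        ≤ eLpNorm K r volume := by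
      apply eLpNorm_mono
      intro x
      rw [Real.norm_eq_abs, Real.norm_eq_abs,
        abs_of_nonneg (Set.indicator_nonneg (fun _ _ => by positivity) x),
        abs_of_nonneg (hKnn x)]
      rw [Set.indicator_apply]
      split_ifs with hx
      · exact hKge x hx
      · exact hKnn x
    refine le_trans ?_ hmono
    rw [eLpNorm_indicator_const' measurableSet_Icc ?_ hr0]
    · rw [Real.volume_Icc, sub_zero]
      have h1 : (1 / r.toReal) = γ := by rw [hγ, one_div, one_div, ENNReal.toReal_inv]
      rw [h1, ENNReal.ofReal_rpow_of_nonneg (hSpos n).le hγ0,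
        Real.enorm_eq_ofReal (by positivity), ← ENNReal.ofReal_mul (by positivity)]
      refine ENNReal.ofReal_le_ofReal (le_of_eq ?_)
      calc κ * b n * T n ^ (-a) = κ * (c n * S n ^ γ) := by rw [hcS n]; field_simp
        _ = c n * κ * S n ^ γ := by ring
    · rw [Real.volume_Icc, sub_zero]
      simp only [ne_eq, ENNReal.ofReal_eq_zero, not_le]
      exact hSpos n
  have hfin : eLpNorm K r volume ≠ ∞ :=
    ne_top_of_le_ne_top (by simp) hupper
  have htoReal : κ * b n * (T n)^(-a) ≤ (eLpNorm K r volume).toReal := by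
    have h1 := ENNReal.toReal_mono hfin hlower
    rwa [ENNReal.toReal_ofReal (by positivity)] at h1
  have hψT : 0 < ψ (T n) := hψpos _ ht
  have hTa : 0 < (T n)^a := Real.rpow_pos_of_pos ht a
  have harith : (n:ℝ)+1 < (κ * b n * (T n)^(-a)) / ψ (T n) := by
    have h2 : ψ (T n) * (T n)^a < κ * b n / ((n:ℝ)+1) := hTlt n
    have hn1 : (0:ℝ) < (n:ℝ)+1 := by positivity
    have key : ((n:ℝ)+1) * (ψ (T n) * (T n)^a) < κ * b n := by
      have h3 := mul_lt_mul_of_pos_left h2 hn1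
      have h4 : ((n:ℝ)+1) * (κ * b n / ((n:ℝ)+1)) = κ * b n := by field_simp
      linarith
    rw [lt_div_iff₀ hψT, Real.rpow_neg ht.le,
      show κ * b n * ((T n)^a)⁻¹ = (κ * b n) / (T n)^a from by rw [div_eq_mul_inv],
      lt_div_iff₀ hTa]
    calc ((n:ℝ)+1) * ψ (T n) * (T n)^a = ((n:ℝ)+1) * (ψ (T n) * (T n)^a) := by ring
      _ < κ * b n := key
  have hfinal : (n:ℝ)+1 ≤ (eLpNorm K r volume).toReal / ψ (T n) := by
    refine le_trans harith.le ?_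
    gcongr
  linarith
end

section
/- Define f : ℝ → ℝ by f(x) = 1/(log x)² for x ≥ e and f(x) = 0 otherwise. Then f ∈ L^∞(ℝ), but for every s with 1 ≤ s < ∞ and every t > 0, the convolution f∗Θ_t does not belong to L^s(ℝ). -/
open MeasureTheory Real
open scoped ENNReal

private lemma f_meas :
    Measurable (fun x : ℝ => if Real.exp 1 ≤ x then 1 / Real.log x ^ 2 else 0) := by
  refine Measurable.ite (measurableSet_le measurable_const measurable_id) ?_ measurable_const
  exact measurable_const.div (Real.measurable_log.pow_const 2)

private lemma f_nonneg (x : ℝ) :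
    0 ≤ (if Real.exp 1 ≤ x then 1 / Real.log x ^ 2 else 0) := by
  split <;> positivity

private lemma log_ge_one {x : ℝ} (hx : Real.exp 1 ≤ x) : 1 ≤ Real.log x := by
  have := Real.log_le_log (Real.exp_pos 1) hx
  simpa using this

private lemma f_le_one (x : ℝ) :
    (if Real.exp 1 ≤ x then 1 / Real.log x ^ 2 else 0) ≤ 1 := by
  split
  · rename_i h
    have h1 : (1:ℝ) ≤ Real.log x := log_ge_one h
    rw [div_le_one (by nlinarith)]
    nlinarith
  · norm_num

private lemma heat_pos {t : ℝ} (ht : 0 < t) (x : ℝ) : 0 < heatKernel t x := by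
  unfold heatKernel
  have : 0 < Real.sqrt (Real.pi * t) := Real.sqrt_pos.2 (mul_pos Real.pi_pos ht)
  positivity

private lemma heat_integrable {t : ℝ} (ht : 0 < t) : Integrable (heatKernel t) := by
  have h : Integrable (fun y : ℝ => Real.exp (-(1/(4*t)) * y^2)) :=
    integrable_exp_neg_mul_sq (by positivity)
  refine (h.div_const (2 * Real.sqrt (Real.pi * t))).congr (ae_of_all _ fun y => ?_)
  unfold heatKernel
  ring_nf

private lemma heat_mono {t y : ℝ} (ht : 0 < t) (hy : y ∈ Set.Ioc (0:ℝ) 1) :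
    heatKernel t 1 ≤ heatKernel t y := by
  unfold heatKernel
  have hs : 0 < Real.sqrt (Real.pi * t) := Real.sqrt_pos.2 (mul_pos Real.pi_pos ht)
  have : Real.exp (-1 ^ 2 / (4 * t)) ≤ Real.exp (-y ^ 2 / (4 * t)) := by
    apply Real.exp_le_exp.2
    have : y ^ 2 ≤ 1 ^ 2 := by nlinarith [hy.1, hy.2]
    apply div_le_div_of_nonneg_right ?_ (by positivity)
    · linarith
  exact div_le_div_of_nonneg_right this (by positivity)

private lemma conv_integrand_integrable_s18 {t : ℝ} (ht : 0 < t) (x : ℝ) :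
    Integrable (fun y : ℝ =>
      (if Real.exp 1 ≤ x - y then 1 / Real.log (x - y) ^ 2 else 0) * heatKernel t y) := by
  refine (heat_integrable ht).mono' ?_ (ae_of_all _ fun y => ?_)
  · have hm : Measurable (heatKernel t) := by unfold heatKernel; fun_prop
    exact ((f_meas.comp (measurable_const.sub measurable_id)).mul hm).aestronglyMeasurable
  · have h1 := f_nonneg (x - y)
    have h2 := f_le_one (x - y)
    have h3 := (heat_pos ht y).le
    rw [Real.norm_eq_abs, abs_of_nonneg (mul_nonneg h1 h3)]
    nlinarith

private lemma conv_lower {t : ℝ} (ht : 0 < t) {x : ℝ} (hx : Real.exp 1 + 1 ≤ x) :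
    heatKernel t 1 / Real.log x ^ 2 ≤
      ∫ y : ℝ, (if Real.exp 1 ≤ x - y then 1 / Real.log (x - y) ^ 2 else 0) * heatKernel t y := by
  have hi := conv_integrand_integrable_s18 ht x
  have hlogx : 1 ≤ Real.log x := log_ge_one (by nlinarith [Real.exp_pos 1, hx])
  have hpt : ∀ y ∈ Set.Ioc (0:ℝ) 1,
      heatKernel t 1 / Real.log x ^ 2 ≤
        (if Real.exp 1 ≤ x - y then 1 / Real.log (x - y) ^ 2 else 0) * heatKernel t y := by
    intro y hy
    have hxy : Real.exp 1 ≤ x - y := by have := hy.2; linarith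
    rw [if_pos hxy]
    have hlxy : 1 ≤ Real.log (x - y) := log_ge_one hxy
    have hle : Real.log (x - y) ≤ Real.log x :=
      Real.log_le_log (lt_of_lt_of_le (Real.exp_pos 1) hxy) (by have := hy.1; linarith)
    have h1 : heatKernel t 1 ≤ heatKernel t y := heat_mono ht hy
    have h2 : (1:ℝ) / Real.log x ^ 2 ≤ 1 / Real.log (x - y) ^ 2 := by
      apply div_le_div_of_nonneg_left one_pos.le (by nlinarith) ?_
      nlinarith
    calc heatKernel t 1 / Real.log x ^ 2
        = (1 / Real.log x ^ 2) * heatKernel t 1 := by ring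
      _ ≤ (1 / Real.log (x - y) ^ 2) * heatKernel t y :=
          mul_le_mul h2 h1 (heat_pos ht 1).le (by positivity)
  have hset : heatKernel t 1 / Real.log x ^ 2 ≤
      ∫ y in Set.Ioc (0:ℝ) 1,
        (if Real.exp 1 ≤ x - y then 1 / Real.log (x - y) ^ 2 else 0) * heatKernel t y := by
    have := setIntegral_ge_of_const_le (c := heatKernel t 1 / Real.log x ^ 2)
      measurableSet_Ioc (by simp) hpt hi.integrableOn
    simpa using this
  refine hset.trans ?_
  exact setIntegral_le_integral hi (ae_of_all _ fun y =>
    mul_nonneg (f_nonneg (x - y)) (heat_pos ht y).le)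

theorem convolution_bounded_not_in_Lp :
    MemLp (fun x : ℝ => if Real.exp 1 ≤ x then 1 / Real.log x ^ 2 else 0)
        ∞ (volume : Measure ℝ) ∧
      ∀ s : ℝ, 1 ≤ s → ∀ t : ℝ, 0 < t →
        ¬ MemLp
          (fun x : ℝ => ∫ y : ℝ,
            (if Real.exp 1 ≤ x - y then 1 / Real.log (x - y) ^ 2 else 0) * heatKernel t y)
          (ENNReal.ofReal s) (volume : Measure ℝ) := by
  constructor
  · refine memLp_top_of_bound f_meas.aestronglyMeasurable 1 (ae_of_all _ fun x => ?_)
    rw [Real.norm_eq_abs, abs_of_nonneg (f_nonneg x)]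
    exact f_le_one x
  · intro s hs t ht hmem
    set g := fun x : ℝ => ∫ y : ℝ,
      (if Real.exp 1 ≤ x - y then 1 / Real.log (x - y) ^ 2 else 0) * heatKernel t y with hg
    have hs0 : (0:ℝ) < s := by linarith
    have hp0 : ENNReal.ofReal s ≠ 0 := by
      simp [ENNReal.ofReal_eq_zero]; linarith
    have hint : Integrable (fun x => ‖g x‖ ^ s) := by
      have := hmem.integrable_norm_rpow hp0 ENNReal.ofReal_ne_top
      rwa [ENNReal.toReal_ofReal hs0.le] at this
    set c := heatKernel t 1 with hc
    have hcpos : 0 < c := heat_pos ht 1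
    -- eventual bound : log x ^ (2*s) ≤ x ^ (1/2)
    have hlo := isLittleO_log_rpow_rpow_atTop (s := (1/2 : ℝ)) (2*s) (by norm_num)
    have hev : ∀ᶠ x : ℝ in Filter.atTop,
        Real.exp 1 + 1 ≤ x ∧ ‖Real.log x ^ (2*s)‖ ≤ 1 * ‖x ^ ((1:ℝ)/2)‖ :=
      (Filter.eventually_ge_atTop _).and (hlo.def one_pos)
    obtain ⟨B, hB⟩ := Filter.eventually_atTop.1 hev
    set B' := max B (Real.exp 1 + 1) with hB'
    have hB'pos : 0 < B' := lt_of_lt_of_le (by positivity) (le_max_right _ _)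
    have key : ∀ x ∈ Set.Ioi B', |x ^ (-(1/2) : ℝ)| ≤ c ^ (-s) * ‖g x‖ ^ s := by
      intro x hx
      have hxB : B ≤ x := le_trans (le_max_left _ _) (le_of_lt hx)
      obtain ⟨hx1, hx2⟩ := hB x hxB
      have hxpos : 0 < x := lt_of_lt_of_le (by positivity) hx1
      have hlogx : 1 ≤ Real.log x := log_ge_one (by nlinarith [Real.exp_pos 1])
      have hglow : c / Real.log x ^ 2 ≤ g x := conv_lower ht hx1
      have hgx : c / Real.log x ^ 2 ≤ ‖g x‖ :=
        hglow.trans (le_abs_self _)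
      have h1 : (c / Real.log x ^ 2) ^ s ≤ ‖g x‖ ^ s :=
        Real.rpow_le_rpow (by positivity) hgx hs0.le
      have h2 : (c / Real.log x ^ 2) ^ s = c ^ s / Real.log x ^ (2*s) := by
        rw [Real.div_rpow hcpos.le (by positivity)]
        congr 1
        rw [← Real.rpow_natCast (Real.log x) 2, ← Real.rpow_mul (by linarith)]
        norm_num
      have hlog2s : Real.log x ^ (2*s) ≤ x ^ ((1:ℝ)/2) := by
        have hxr : (0:ℝ) ≤ x ^ ((1:ℝ)/2) := Real.rpow_nonneg hxpos.le _
        have hlr : (0:ℝ) ≤ Real.log x ^ (2*s) := Real.rpow_nonneg (by linarith) _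
        rw [Real.norm_eq_abs, Real.norm_eq_abs, abs_of_nonneg hxr, abs_of_nonneg hlr] at hx2
        linarith
      have hlogpos : (0:ℝ) < Real.log x ^ (2*s) := Real.rpow_pos_of_pos (by linarith) _
      have h3 : c ^ s * x ^ (-(1/2):ℝ) ≤ c ^ s / Real.log x ^ (2*s) := by
        rw [Real.rpow_neg hxpos.le, div_eq_mul_inv]
        apply mul_le_mul_of_nonneg_left ?_ (Real.rpow_nonneg hcpos.le s)
        apply inv_anti₀ hlogpos hlog2s
      have h4 : c ^ s * x ^ (-(1/2):ℝ) ≤ ‖g x‖ ^ s := by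
        calc c ^ s * x ^ (-(1/2):ℝ) ≤ c ^ s / Real.log x ^ (2*s) := h3
          _ = (c / Real.log x ^ 2) ^ s := h2.symm
          _ ≤ ‖g x‖ ^ s := h1
      have hcs : (0:ℝ) < c ^ s := Real.rpow_pos_of_pos hcpos _
      rw [abs_of_nonneg (Real.rpow_nonneg hxpos.le _), Real.rpow_neg hcpos.le]
      have h5 := mul_le_mul_of_nonneg_left h4 (inv_nonneg.2 hcs.le)
      rwa [← mul_assoc, inv_mul_cancel₀ hcs.ne', one_mul] at h5
    have hintOn : IntegrableOn (fun x : ℝ => x ^ (-(1/2):ℝ)) (Set.Ioi B') := by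
      refine Integrable.mono' ((hint.const_mul (c ^ (-s))).integrableOn) ?_ ?_
      · exact (Measurable.aestronglyMeasurable (by fun_prop)).restrict
      · rw [ae_restrict_iff' measurableSet_Ioi]
        exact ae_of_all _ fun x hx => by
          rw [Real.norm_eq_abs]; exact key x hx
    have := (integrableOn_Ioi_rpow_iff hB'pos).1 hintOn
    norm_num at this
end
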